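/- The disjoint union (S ⊔ T, U ⊔ V) is in general not a coproduct of (S, U) and (T, V) in the category F⁺. Concretely, the object ({*}, {*}) ⊔ ({*}, {*}) is not a coproduct of ({*}, {*}) with itself in F⁺. -/
import Mathlib


open CategoryTheory

/-- An object of F⁺: a finite set together with a subset. -/
structure FPlusObj where
  X : Type
  [fin : Fintype X]
  U : Set X

attribute [instance] FPlusObj.fin

/-- A morphism of F⁺: a function restricting to a bijection on the
distinguished subsets. -/
@[ext] structure FPlusHom (A B : FPlusObj) where
  toFun : A.X → B.X
  bijOn : Set.BijOn toFun A.U B.U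

/-- The category F⁺. -/
instance : Category FPlusObj where
  Hom := FPlusHom
  id A := ⟨id, Set.bijOn_id A.U⟩
  comp f g := ⟨g.toFun ∘ f.toFun, g.bijOn.comp f.bijOn⟩

/-- Disjoint union of objects of F⁺. -/
def FPlusObj.tensor (A B : FPlusObj) : FPlusObj :=
  { X := A.X ⊕ B.X
    U := Sum.inl '' A.U ∪ Sum.inr '' B.U }

/-- The one-point object `({*}, {*})` of F⁺. -/
def ptObj : FPlusObj := { X := PUnit, U := Set.univ }

/-- The disjoint union `({*}, {*}) ⊔ ({*}, {*})` is not a coproduct of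
`({*}, {*})` with itself in F⁺: there are no coprojections making it a colimit
binary cofan. -/
theorem stmt4 :
    ¬ ∃ (i₁ i₂ : ptObj ⟶ ptObj.tensor ptObj),
        Nonempty (Limits.IsColimit (Limits.BinaryCofan.mk i₁ i₂)) := by
  rintro ⟨i₁, i₂, ⟨h⟩⟩
  let c : Limits.BinaryCofan ptObj ptObj :=
    Limits.BinaryCofan.mk (𝟙 ptObj) (𝟙 ptObj)
  have f := h.desc c
  have hinj := f.bijOn.injOn
  have h1 : (Sum.inl PUnit.unit : PUnit ⊕ PUnit) ∈ (ptObj.tensor ptObj).U :=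
    Or.inl ⟨PUnit.unit, trivial, rfl⟩
  have h2 : (Sum.inr PUnit.unit : PUnit ⊕ PUnit) ∈ (ptObj.tensor ptObj).U :=
    Or.inr ⟨PUnit.unit, trivial, rfl⟩
  have := hinj h1 h2 rfl
  simp at this
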